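/- arXiv:2007.02186 — 4 statements merged into one kernel-verified Lean document; each statement's English description precedes it below -/
import Mathlib

section
/- Let m ≥ 2, let H be a subgroup of the symmetric group S_m containing equally many even and odd permutations, and let f1 : (ℝ^{d1})^m → [0,∞), f2 : (ℝ^{d2})^m → [0,∞) be measurable kernel functions. Let X1 and X2 be independent random vectors in ℝ^{d1} and ℝ^{d2}, let (X_{1i}, X_{2i}), i = 1,…,m, be independent copies of (X1, X2), and assume E[f_k(X_{k1},…,X_{km})] < ∞ for k = 1,2. Then the generalized symmetric covariance vanishes: μ_{f1,f2,H}(X1, X2) = 0. -/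
open MeasureTheory

/-- Sign-weighted sum of kernel evaluations over a finite set of permutations:
`∑_{σ ∈ H} sgn(σ) f (x_{σ(1)}, …, x_{σ(m)})`. -/
noncomputable def permSum {m : ℕ} {E : Type*} (H : Finset (Equiv.Perm (Fin m)))
    (f : (Fin m → E) → ℝ) (x : Fin m → E) : ℝ :=
  ∑ σ ∈ H, ((Equiv.Perm.sign σ : ℤ) : ℝ) * f (fun i => x (σ i))

/-- The dependence kernel `k_{f1,f2,H}`. -/
noncomputable def depKernel {m : ℕ} {E1 E2 : Type*} (H : Finset (Equiv.Perm (Fin m)))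
    (f1 : (Fin m → E1) → ℝ) (f2 : (Fin m → E2) → ℝ) (z : Fin m → E1 × E2) : ℝ :=
  permSum H f1 (fun i => (z i).1) * permSum H f2 (fun i => (z i).2)

/-- The generalized symmetric covariance `μ_{f1,f2,H}` of a joint law `μ` on `E1 × E2`:
the expectation of the dependence kernel evaluated at `m` independent copies of the pair,
i.e. the integral against the `m`-fold product measure. -/
noncomputable def gsc {m : ℕ} {E1 E2 : Type*} [MeasurableSpace E1] [MeasurableSpace E2]
    (H : Finset (Equiv.Perm (Fin m)))
    (f1 : (Fin m → E1) → ℝ) (f2 : (Fin m → E2) → ℝ) (μ : Measure (E1 × E2)) : ℝ :=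
  ∫ z, depKernel H f1 f2 z ∂(Measure.pi fun _ : Fin m => μ)

/-! Under independence the law of the `m` copies is a product of a law on the first
coordinates and a law on the second, so the GSC factors as the product of the expectations of
the two signed permutation sums. Each factor vanishes: the law of i.i.d. copies is invariant
under permuting them, so all terms `f (x ∘ σ)` have the same expectation, and their signs sum
to zero because `H` has as many even as odd permutations. -/

open Finset Equiv

lemma sum_sign_eq_card_sub_card {α : Type*} [DecidableEq α] [Fintype α] (s : Finset (Perm α)) :
    ∑ σ ∈ s, (Perm.sign σ : ℤ) =
      #(s.filter (Perm.sign · = 1)) - #(s.filter (Perm.sign · = -1)) := by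
  have hsign (σ : Perm α) : (Perm.sign σ : ℤ)
      = (if Perm.sign σ = 1 then 1 else 0) - (if Perm.sign σ = -1 then 1 else 0) := by
    rcases Int.units_eq_one_or (Perm.sign σ) with h | h <;> simp [h]
  simp_rw [hsign, sum_sub_distrib, sum_boole]

lemma MeasurableEquiv.piCongrLeft_symm_apply_const {ι E : Type*} [MeasurableSpace E]
    (σ : Perm ι) (x : ι → E) :
    MeasurableEquiv.piCongrLeft (fun _ => E) σ.symm x = fun i => x (σ i) := by
  ext i
  simp [MeasurableEquiv.coe_piCongrLeft, Equiv.piCongrLeft_apply]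

section
variable {ι E : Type*} [Fintype ι] [MeasurableSpace E] (μ : Measure E) [SigmaFinite μ]

theorem integral_comp_perm (σ : Perm ι) (f : (ι → E) → ℝ) :
    ∫ x, f (fun i => x (σ i)) ∂Measure.pi (fun _ => μ) =
      ∫ x, f x ∂Measure.pi (fun _ => μ) := by
  simpa only [MeasurableEquiv.piCongrLeft_symm_apply_const] using
    (measurePreserving_piCongrLeft (fun _ => μ) σ.symm).integral_comp' f

theorem integrable_comp_perm_iff (σ : Perm ι) {f : (ι → E) → ℝ} :
    Integrable (fun x => f (fun i => x (σ i))) (Measure.pi fun _ => μ) ↔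
      Integrable f (Measure.pi fun _ => μ) := by
  simpa only [Function.comp_def, MeasurableEquiv.piCongrLeft_symm_apply_const] using
    (measurePreserving_piCongrLeft (fun _ => μ) σ.symm).integrable_comp_emb
      (MeasurableEquiv.piCongrLeft _ σ.symm).measurableEmbedding

end

theorem integral_pi_prod_mul {ι E₁ E₂ : Type*} [Fintype ι]
    [MeasurableSpace E₁] [MeasurableSpace E₂]
    (μ₁ : Measure E₁) (μ₂ : Measure E₂) [SigmaFinite μ₁] [SigmaFinite μ₂]
    (g₁ : (ι → E₁) → ℝ) (g₂ : (ι → E₂) → ℝ) :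
    ∫ z, g₁ (fun i => (z i).1) * g₂ (fun i => (z i).2)
        ∂Measure.pi (fun _ => μ₁.prod μ₂) =
      (∫ x, g₁ x ∂Measure.pi (fun _ => μ₁)) *
        ∫ y, g₂ y ∂Measure.pi (fun _ => μ₂) := by
  rw [← integral_prod_mul, ← (measurePreserving_arrowProdEquivProdArrow E₁ E₂ ι
    (fun _ => μ₁) (fun _ => μ₂)).integral_comp']
  rfl

theorem integral_permSum_eq_zero {m : ℕ} {E : Type*} [MeasurableSpace E]
    {H : Finset (Perm (Fin m))}
    (hH : #(H.filter (Perm.sign · = 1)) = #(H.filter (Perm.sign · = -1)))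
    (μ : Measure E) [SigmaFinite μ] {f : (Fin m → E) → ℝ}
    (hf : Integrable f (Measure.pi fun _ => μ)) :
    ∫ x, permSum H f x ∂Measure.pi (fun _ => μ) = 0 := by
  have hsign : ∑ σ ∈ H, ((Perm.sign σ : ℤ) : ℝ) = 0 := by
    rw [← Int.cast_sum, sum_sign_eq_card_sub_card, hH, sub_self, Int.cast_zero]
  simp only [permSum]
  rw [integral_finsetSum _ fun σ _ => ((integrable_comp_perm_iff μ σ).2 hf).const_mul _]
  simp only [integral_const_mul, integral_comp_perm]
  rw [← sum_mul, hsign, zero_mul]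

theorem gsc_eq_zero_of_indep_general {d1 d2 m : ℕ}
    (H : Finset (Equiv.Perm (Fin m)))
    (hH_parity : (H.filter fun σ => Equiv.Perm.sign σ = 1).card
      = (H.filter fun σ => Equiv.Perm.sign σ = -1).card)
    (f1 : (Fin m → EuclideanSpace ℝ (Fin d1)) → ℝ)
    (f2 : (Fin m → EuclideanSpace ℝ (Fin d2)) → ℝ)
    (μ1 : Measure (EuclideanSpace ℝ (Fin d1))) (μ2 : Measure (EuclideanSpace ℝ (Fin d2)))
    [IsProbabilityMeasure μ1] [IsProbabilityMeasure μ2]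
    (hf1_int : Integrable f1 (Measure.pi fun _ : Fin m => μ1)) :
    gsc H f1 f2 (μ1.prod μ2) = 0 := by
  unfold gsc depKernel
  rw [integral_pi_prod_mul, integral_permSum_eq_zero hH_parity μ1 hf1_int, zero_mul]

/-- every GSC is a valid measure of dependence in the sense that it vanishes
under independence: if `H ⊆ S_m` is a subgroup with equally many even and odd permutations,
the kernels are nonnegative and measurable with finite expectation under i.i.d. sampling,
and the joint law of `(X1, X2)` is the product `μ1 ⊗ μ2` of its marginals (independence),
then `μ_{f1,f2,H}(X1,X2) = 0`. -/
theorem gsc_eq_zero_of_indep {d1 d2 m : ℕ} (hm : 2 ≤ m)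
    (H : Finset (Equiv.Perm (Fin m)))
    (hH_one : (1 : Equiv.Perm (Fin m)) ∈ H)
    (hH_mul : ∀ σ ∈ H, ∀ τ ∈ H, σ * τ ∈ H)
    (hH_inv : ∀ σ ∈ H, σ⁻¹ ∈ H)
    (hH_parity : (H.filter fun σ => Equiv.Perm.sign σ = 1).card
      = (H.filter fun σ => Equiv.Perm.sign σ = -1).card)
    (f1 : (Fin m → EuclideanSpace ℝ (Fin d1)) → ℝ)
    (f2 : (Fin m → EuclideanSpace ℝ (Fin d2)) → ℝ)
    (hf1_meas : Measurable f1) (hf2_meas : Measurable f2)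
    (hf1_nonneg : ∀ x, 0 ≤ f1 x) (hf2_nonneg : ∀ x, 0 ≤ f2 x)
    (μ1 : Measure (EuclideanSpace ℝ (Fin d1))) (μ2 : Measure (EuclideanSpace ℝ (Fin d2)))
    [IsProbabilityMeasure μ1] [IsProbabilityMeasure μ2]
    (hf1_int : Integrable f1 (Measure.pi fun _ : Fin m => μ1))
    (hf2_int : Integrable f2 (Measure.pi fun _ : Fin m => μ2)) :
    gsc H f1 f2 (μ1.prod μ2) = 0 :=
  gsc_eq_zero_of_indep_general H hH_parity f1 f2 μ1 μ2 hf1_int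
end

section
/- Let X1 and X2 be random vectors in ℝ^{d1} and ℝ^{d2} whose joint distribution is absolutely continuous with respect to Lebesgue measure on ℝ^{d1+d2}, and let (X_{1i}, X_{2i}), i = 1,…,5, be independent copies of (X1, X2). Then E[ ∏_{k=1}^{2} (1/2){ 1(X_{k1}, X_{k2} ⪯ X_{k5}) − 1(X_{k1}, X_{k3} ⪯ X_{k5}) − 1(X_{k4}, X_{k2} ⪯ X_{k5}) + 1(X_{k4}, X_{k3} ⪯ X_{k5}) } ] = E[ ( F_{(X1,X2)}(X_{15}, X_{25}) − F_{X1}(X_{15}) F_{X2}(X_{25}) )² ], which is nonnegative and equals 0 if and only if X1 and X2 are independent. -/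
open MeasureTheory

/-- Real-valued indicator of a proposition. -/
noncomputable def ind (p : Prop) : ℝ :=
  letI := Classical.propDecidable p
  if p then 1 else 0

/-!
With the fifth copy `z` fixed, each kernel factorises, e.g. as `½ (f y₀ - f y₃) (f y₁ - f y₂)`
with `f = 1(· ⪯ z.1)`; with `g = 1(· ⪯ z.2)` the product of the two kernels becomes
`¼ [(f y₀ - f y₃) (g y₀ - g y₃)] [(f y₁ - f y₂) (g y₁ - g y₂)]`. The two brackets involve disjoint
copies, and each integrates to `2 Cov(f, g) = 2 (F(z) - F₁(z.1) F₂(z.2))`.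

If the integral vanishes, the CDFs of `μ` and `ν = μ₁ ⊗ μ₂` agree on a set `Z` of full
`μ`-measure. Near a Lebesgue density point of `Z`, an averaging argument finds arbitrarily small
cubes all of whose `2^d` corners lie in `Z`; by inclusion–exclusion `μ` and `ν` agree on these
cubes, so by Lebesgue differentiation their densities agree a.e. on `Z`. Since `μ(Zᶜ) = 0` and
both are probability measures, `μ = ν`.
-/

open ProbabilityTheory Set Filter Metric Topology
open scoped ENNReal

section Indicator

variable {α : Type*}

lemma ind_pos {p : Prop} (h : p) : ind p = 1 := by
  simp [ind, h]

lemma ind_neg {p : Prop} (h : ¬p) : ind p = 0 := by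
  simp [ind, h]

lemma ind_and (p q : Prop) : ind (p ∧ q) = ind p * ind q := by
  by_cases hp : p <;> by_cases hq : q <;> simp [ind_pos, ind_neg, hp, hq]

lemma ind_forall {ι : Type*} [Fintype ι] (p : ι → Prop) : ind (∀ i, p i) = ∏ i, ind (p i) := by
  by_cases h : ∀ i, p i
  · simp [ind_pos h, ind_pos (h _)]
  · obtain ⟨i, hi⟩ := not_forall.1 h
    rw [ind_neg h, Finset.prod_eq_zero (Finset.mem_univ i) (ind_neg hi)]

lemma abs_ind_sub_ind_le_one (p q : Prop) : |ind p - ind q| ≤ 1 := by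
  by_cases hp : p <;> by_cases hq : q <;> simp [ind_pos, ind_neg, hp, hq]

lemma ind_eq_indicator (p : α → Prop) : (fun x => ind (p x)) = {x | p x}.indicator 1 := by
  ext x
  by_cases h : p x <;> simp [ind_pos, ind_neg, h]

variable [MeasurableSpace α] {μ : Measure α} {p q : α → Prop}

lemma measurable_ind (hp : MeasurableSet {x | p x}) : Measurable fun x => ind (p x) := by
  rw [ind_eq_indicator]
  exact measurable_const.indicator hp

lemma integral_ind (hp : MeasurableSet {x | p x}) : ∫ x, ind (p x) ∂μ = μ.real {x | p x} := by
  rw [ind_eq_indicator, integral_indicator_one hp]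

lemma integral_ind_mem {s : Set α} (hs : MeasurableSet s) : ∫ x, ind (x ∈ s) ∂μ = μ.real s :=
  integral_ind hs

lemma memLp_ind [IsFiniteMeasure μ] (hp : MeasurableSet {x | p x}) (r : ℝ≥0∞) :
    MemLp (fun x => ind (p x)) r μ := by
  rw [ind_eq_indicator]
  exact memLp_indicator_const r hp 1 (Or.inr (measure_ne_top μ _))

lemma integrable_ind [IsFiniteMeasure μ] (hp : MeasurableSet {x | p x}) :
    Integrable (fun x => ind (p x)) μ :=
  (memLp_ind hp 1).integrable le_rfl

lemma covariance_ind [IsProbabilityMeasure μ] (hp : MeasurableSet {x | p x})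
    (hq : MeasurableSet {x | q x}) :
    cov[fun x => ind (p x), fun x => ind (q x); μ]
      = μ.real {x | p x ∧ q x} - μ.real {x | p x} * μ.real {x | q x} := by
  rw [covariance_eq_sub (memLp_ind hp 2) (memLp_ind hq 2), integral_ind hp, integral_ind hq,
    ← integral_ind (p := fun x => p x ∧ q x) (hp.inter hq)]
  simp only [Pi.mul_apply, ind_and]

end Indicator

section HoeffdingKernel

variable {X : Type*}

/-- The paper's kernel `f^M(w) = ½ 1(w₁, w₂ ⪯ w₅)` summed with signs over
`H*⁵ = {id, (1 4), (2 3), (1 4)(2 3)}`, for an arbitrary relation `r` in place of `⪯`. -/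
noncomputable def hoeffdingKernel (r : X → X → Prop) (x : Fin 5 → X) : ℝ :=
  1 / 2 * (ind (r (x 0) (x 4) ∧ r (x 1) (x 4)) - ind (r (x 0) (x 4) ∧ r (x 2) (x 4))
    - ind (r (x 3) (x 4) ∧ r (x 1) (x 4)) + ind (r (x 3) (x 4) ∧ r (x 2) (x 4)))

lemma hoeffdingKernel_eq (r : X → X → Prop) (x : Fin 5 → X) :
    hoeffdingKernel r x = 1 / 2 * ((ind (r (x 0) (x 4)) - ind (r (x 3) (x 4)))
      * (ind (r (x 1) (x 4)) - ind (r (x 2) (x 4)))) := by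
  simp only [hoeffdingKernel, ind_and]
  ring

lemma hoeffdingKernel_snoc (r : X → X → Prop) (y : Fin 4 → X) (z : X) :
    hoeffdingKernel r (Fin.snoc y z) = 1 / 2 * ((ind (r (y 0) z) - ind (r (y 3) z))
      * (ind (r (y 1) z) - ind (r (y 2) z))) :=
  hoeffdingKernel_eq r _

lemma abs_hoeffdingKernel_le (r : X → X → Prop) (x : Fin 5 → X) :
    |hoeffdingKernel r x| ≤ 1 / 2 := by
  rw [hoeffdingKernel_eq, abs_mul, abs_mul, abs_of_pos one_half_pos]
  have := mul_le_one₀ (abs_ind_sub_ind_le_one (r (x 0) (x 4)) (r (x 3) (x 4))) (abs_nonneg _)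
    (abs_ind_sub_ind_le_one (r (x 1) (x 4)) (r (x 2) (x 4)))
  linarith

variable [MeasurableSpace X]

lemma measurable_hoeffdingKernel {r : X → X → Prop}
    (hr : MeasurableSet {p : X × X | r p.1 p.2}) : Measurable (hoeffdingKernel r) := by
  have h : ∀ i j : Fin 5, MeasurableSet {x : Fin 5 → X | r (x i) (x j)} := fun i j =>
    hr.preimage (f := fun x : Fin 5 → X => (x i, x j)) (by fun_prop)
  have hind : ∀ i j : Fin 5,
      Measurable fun x : Fin 5 → X => ind (r (x i) (x 4) ∧ r (x j) (x 4)) :=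
    fun i j => measurable_ind ((h i 4).inter (h j 4))
  unfold hoeffdingKernel
  fun_prop

variable (μ : Measure X)

lemma integral_prod_sub_mul_sub [IsProbabilityMeasure μ] {f g : X → ℝ} (hf : MemLp f 2 μ)
    (hg : MemLp g 2 μ) :
    ∫ p, (f p.1 - f p.2) * (g p.1 - g p.2) ∂μ.prod μ = 2 * cov[f, g; μ] := by
  have hf1 := hf.integrable one_le_two
  have hg1 := hg.integrable one_le_two
  have hfg := hf.integrable_mul hg
  have h1 : Integrable (fun _ : X => (1 : ℝ)) μ := integrable_const 1
  have hfg₁ : Integrable (fun p : X × X => (f * g) p.1 * 1) (μ.prod μ) := hfg.mul_prod h1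
  have hfg₂ : Integrable (fun p : X × X => 1 * (f * g) p.2) (μ.prod μ) := h1.mul_prod hfg
  have hsplit : ∀ p : X × X, (f p.1 - f p.2) * (g p.1 - g p.2)
      = ((f * g) p.1 * 1 - f p.1 * g p.2) - (g p.1 * f p.2 - 1 * (f * g) p.2) := fun p => by
    simp only [Pi.mul_apply]
    ring
  simp_rw [hsplit]
  rw [integral_sub, integral_sub, integral_sub, integral_prod_mul (f * g) fun _ => 1,
    integral_prod_mul f g, integral_prod_mul g f, integral_prod_mul (fun _ => 1) (f * g),
    covariance_eq_sub hf hg]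
  · simp only [integral_const, probReal_univ, smul_eq_mul, mul_one, one_mul]
    ring
  all_goals fun_prop

lemma integral_pi_fin_four_mul [SigmaFinite μ] (F G : X × X → ℝ) :
    ∫ y : Fin 4 → X, F (y 0, y 3) * G (y 1, y 2) ∂Measure.pi (fun _ => μ)
      = (∫ p, F p ∂μ.prod μ) * ∫ p, G p ∂μ.prod μ := by
  -- `σ` sends the two blocks `Fin 2 ⊕ Fin 2` to the coordinates `(0, 3)` and `(1, 2)`.
  let σ : Fin 2 ⊕ Fin 2 ≃ Fin 4 := finSumFinEquiv.trans ((Equiv.swap 2 3).trans (Equiv.swap 1 3))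
  let e := (MeasurableEquiv.piCongrLeft (fun _ => X) σ).symm.trans
    (MeasurableEquiv.sumPiEquivProdPi fun _ => X)
  have he : MeasurePreserving e (Measure.pi fun _ => μ)
      ((Measure.pi fun _ => μ).prod (Measure.pi fun _ => μ)) :=
    ((measurePreserving_piCongrLeft (fun _ => μ) σ).symm _).trans
      (measurePreserving_sumPiEquivProdPi fun _ => μ)
  have h2 := measurePreserving_finTwoArrow μ
  calc ∫ y : Fin 4 → X, F (y 0, y 3) * G (y 1, y 2) ∂Measure.pi (fun _ => μ)
      = ∫ y, F (MeasurableEquiv.finTwoArrow (e y).1) * G (MeasurableEquiv.finTwoArrow (e y).2)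
          ∂Measure.pi (fun _ => μ) := rfl
    _ = (∫ p, F p ∂μ.prod μ) * ∫ p, G p ∂μ.prod μ := by
      rw [he.integral_comp' (fun q => F (MeasurableEquiv.finTwoArrow q.1)
          * G (MeasurableEquiv.finTwoArrow q.2)),
        integral_prod_mul (fun q => F (MeasurableEquiv.finTwoArrow q))
          fun q => G (MeasurableEquiv.finTwoArrow q),
        h2.integral_comp', h2.integral_comp']

lemma integral_pi_fin_succ_eq_integral_snoc {n : ℕ} [SigmaFinite μ]
    {h : (Fin (n + 1) → X) → ℝ} (hh : Integrable h (Measure.pi fun _ => μ)) :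
    ∫ x, h x ∂Measure.pi (fun _ => μ) = ∫ z, ∫ y, h (Fin.snoc y z) ∂Measure.pi (fun _ => μ) ∂μ := by
  let e := MeasurableEquiv.piFinSuccAbove (fun _ : Fin (n + 1) => X) (Fin.last n)
  have he : MeasurePreserving e.symm _ _ :=
    (measurePreserving_piFinSuccAbove (fun _ => μ) (Fin.last n)).symm e
  have hint : Integrable (fun p => h (e.symm p)) (μ.prod (Measure.pi fun _ => μ)) :=
    (he.integrable_comp_emb e.symm.measurableEmbedding).2 hh
  rw [← he.integral_comp' h, integral_prod _ hint]
  simp [e, MeasurableEquiv.piFinSuccAbove_symm_apply, Fin.snocEquiv]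

theorem integral_hoeffdingKernel_mul [IsProbabilityMeasure μ]
    {R S : X → X → Prop} (hR : MeasurableSet {p : X × X | R p.1 p.2})
    (hS : MeasurableSet {p : X × X | S p.1 p.2}) :
    ∫ x, hoeffdingKernel R x * hoeffdingKernel S x ∂Measure.pi (fun _ : Fin 5 => μ)
      = ∫ z, (μ.real {w | R w z ∧ S w z} - μ.real {w | R w z} * μ.real {w | S w z}) ^ 2 ∂μ := by
  have hint : Integrable (fun x => hoeffdingKernel R x * hoeffdingKernel S x)
      (Measure.pi fun _ : Fin 5 => μ) := by
    refine .of_bound ((measurable_hoeffdingKernel hR).mul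
      (measurable_hoeffdingKernel hS)).aestronglyMeasurable 1 (ae_of_all _ fun x => ?_)
    rw [Real.norm_eq_abs, abs_mul]
    nlinarith [abs_hoeffdingKernel_le R x, abs_hoeffdingKernel_le S x,
      abs_nonneg (hoeffdingKernel R x), abs_nonneg (hoeffdingKernel S x)]
  rw [integral_pi_fin_succ_eq_integral_snoc μ hint]
  refine integral_congr_ae (ae_of_all _ fun z => ?_)
  have hRz : MeasurableSet {w | R w z} := measurable_prodMk_right hR
  have hSz : MeasurableSet {w | S w z} := measurable_prodMk_right hS
  set f := fun w => ind (R w z)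
  set g := fun w => ind (S w z)
  calc ∫ y : Fin 4 → X, hoeffdingKernel R (Fin.snoc y z) * hoeffdingKernel S (Fin.snoc y z)
        ∂Measure.pi (fun _ => μ)
      = ∫ y : Fin 4 → X, 1 / 4 * (((f (y 0) - f (y 3)) * (g (y 0) - g (y 3)))
          * ((f (y 1) - f (y 2)) * (g (y 1) - g (y 2)))) ∂Measure.pi (fun _ => μ) := by
        congr 1
        ext y
        rw [hoeffdingKernel_snoc, hoeffdingKernel_snoc]
        ring
    _ = cov[f, g; μ] ^ 2 := by
        rw [integral_const_mul, integral_pi_fin_four_mul μ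
          (fun p => (f p.1 - f p.2) * (g p.1 - g p.2)) (fun p => (f p.1 - f p.2) * (g p.1 - g p.2)),
          integral_prod_sub_mul_sub μ (memLp_ind hRz 2) (memLp_ind hSz 2)]
        ring
    _ = _ := by rw [covariance_ind hRz hSz]

end HoeffdingKernel

section Boxes

variable {ι : Type*} [Fintype ι] [DecidableEq ι]

open Finset in
lemma ind_mem_pi_Ioc_eq_sum {a b : ι → ℝ} (hab : a ≤ b) (w : ι → ℝ) :
    ind (w ∈ Set.univ.pi fun i => Ioc (a i) (b i))
      = ∑ S : Finset ι, (-1) ^ #S * ind (w ∈ Iic (S.piecewise a b)) := by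
  have hcoord : ∀ i, ind (w i ∈ Ioc (a i) (b i)) = ind (w i ≤ b i) - ind (w i ≤ a i) := by
    intro i
    rw [Set.mem_Ioc]
    by_cases ha : w i ≤ a i
    · rw [ind_neg fun h => (not_lt.2 ha) h.1, ind_pos ha, ind_pos (ha.trans (hab i)), sub_self]
    by_cases hb : w i ≤ b i
    · rw [ind_pos ⟨lt_of_not_ge ha, hb⟩, ind_pos hb, ind_neg ha, sub_zero]
    · rw [ind_neg fun h => hb h.2, ind_neg hb, ind_neg ha, sub_zero]
  have hcorner : ∀ S : Finset ι, ind (w ∈ Iic (S.piecewise a b))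
      = (∏ i ∈ univ \ S, ind (w i ≤ b i)) * ∏ i ∈ S, ind (w i ≤ a i) := by
    intro S
    rw [Set.mem_Iic, Pi.le_def, ind_forall, mul_comm]
    have : ∀ i, ind (w i ≤ S.piecewise a b i)
        = S.piecewise (fun i => ind (w i ≤ a i)) (fun i => ind (w i ≤ b i)) i := by
      intro i
      by_cases hi : i ∈ S <;> simp [hi]
    rw [Finset.prod_congr rfl fun i _ => this i, prod_piecewise, Finset.univ_inter]
  simp_rw [Set.mem_univ_pi, ind_forall, hcoord, Finset.prod_sub, Finset.powerset_univ, hcorner,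
    mul_assoc]

open Finset in
lemma measureReal_pi_Ioc_eq_sum (μ : Measure (ι → ℝ)) [IsFiniteMeasure μ] {a b : ι → ℝ}
    (hab : a ≤ b) :
    μ.real (Set.univ.pi fun i => Ioc (a i) (b i))
      = ∑ S : Finset ι, (-1) ^ #S * μ.real (Iic (S.piecewise a b)) := by
  have hbox : MeasurableSet (Set.univ.pi fun i => Ioc (a i) (b i)) :=
    .univ_pi fun _ => measurableSet_Ioc
  rw [← integral_ind_mem hbox]
  simp_rw [ind_mem_pi_Ioc_eq_sum hab]
  rw [integral_finsetSum _ fun S _ =>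
    (integrable_ind (p := (· ∈ Set.Iic _)) measurableSet_Iic).const_mul _]
  simp_rw [integral_const_mul, integral_ind_mem measurableSet_Iic]

lemma measure_Icc_eq_of_forall_piecewise {μ ν : Measure (ι → ℝ)} [IsFiniteMeasure μ]
    [IsFiniteMeasure ν] (hμ : μ ≪ volume) (hν : ν ≪ volume) {a b : ι → ℝ} (hab : a ≤ b)
    (h : ∀ S : Finset ι, μ (Iic (S.piecewise a b)) = ν (Iic (S.piecewise a b))) :
    μ (Icc a b) = ν (Icc a b) := by
  have hbox : (Set.univ.pi fun i => Ioc (a i) (b i)) =ᵐ[volume] Icc a b :=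
    Measure.univ_pi_Ioc_ae_eq_Icc
  rw [← measure_congr (hμ.ae_eq hbox), ← measure_congr (hν.ae_eq hbox),
    ← ENNReal.toReal_eq_toReal_iff' (measure_ne_top _ _) (measure_ne_top _ _),
    ← measureReal_def, ← measureReal_def, measureReal_pi_Ioc_eq_sum _ hab,
    measureReal_pi_Ioc_eq_sum _ hab]
  simp only [measureReal_def, h]

end Boxes

lemma exists_mem_closedBall_forall_add_notMem {E : Type*} [NormedAddCommGroup E]
    [MeasurableSpace E] [MeasurableAdd E] (μ : Measure E) [μ.IsAddRightInvariant]
    {κ : Type*} [Fintype κ] {v : κ → E} {r : ℝ} (hv : ∀ k, ‖v k‖ ≤ r) {U : Set E} {x : E}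
    (hU : Fintype.card κ * μ (U ∩ closedBall x (2 * r)) < μ (closedBall x r)) :
    ∃ w ∈ closedBall x r, ∀ k, w + v k ∉ U := by
  by_contra! H
  have hcover : closedBall x r ⊆ ⋃ k, (· + v k) ⁻¹' (U ∩ closedBall x (2 * r)) := by
    intro w hw
    obtain ⟨k, hk⟩ := H w hw
    refine mem_iUnion.2 ⟨k, hk, ?_⟩
    rw [mem_closedBall, dist_eq_norm, add_sub_right_comm, two_mul]
    exact (norm_add_le _ _).trans (add_le_add (mem_closedBall_iff_norm.1 hw) (hv k))
  refine hU.not_ge ?_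
  calc μ (closedBall x r)
      ≤ μ (⋃ k, (· + v k) ⁻¹' (U ∩ closedBall x (2 * r))) := measure_mono hcover
    _ ≤ ∑ k, μ ((· + v k) ⁻¹' (U ∩ closedBall x (2 * r))) := measure_iUnion_fintype_le _ _
    _ = Fintype.card κ * μ (U ∩ closedBall x (2 * r)) := by
      simp_rw [measure_preimage_add_right, Finset.sum_const, Finset.card_univ, nsmul_eq_mul]

lemma exists_closedBall_corners_mem {ι : Type*} [Fintype ι] [DecidableEq ι] {Z : Set (ι → ℝ)}
    {x : ι → ℝ} {r : ℝ} (hr : 0 < r)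
    (hZ : volume (Zᶜ ∩ closedBall x (2 * r))
      < (4 ^ Fintype.card ι)⁻¹ * volume (closedBall x (2 * r))) :
    ∃ w ∈ closedBall x r,
      ∀ S : Finset ι, S.piecewise (fun i => w i - r) (fun i => w i + r) ∈ Z := by
  set n := Fintype.card ι
  have hdouble : volume (closedBall x (2 * r)) = 2 ^ n * volume (closedBall x r) := by
    rw [Real.volume_pi_closedBall _ (by positivity), Real.volume_pi_closedBall _ hr.le,
      mul_pow, ENNReal.ofReal_mul (by positivity), ENNReal.ofReal_pow zero_le_two,
      ENNReal.ofReal_ofNat]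
  have hcard : (Fintype.card (Finset ι) : ℝ≥0∞) * volume (Zᶜ ∩ closedBall x (2 * r))
      < volume (closedBall x r) := by
    have h4 : (2 : ℝ≥0∞) ^ n * 2 ^ n = 4 ^ n := by rw [← mul_pow]; norm_num
    calc (Fintype.card (Finset ι) : ℝ≥0∞) * volume (Zᶜ ∩ closedBall x (2 * r))
        < 2 ^ n * ((4 ^ n)⁻¹ * volume (closedBall x (2 * r))) := by
          rw [Fintype.card_finset, Nat.cast_pow, Nat.cast_ofNat]
          exact (ENNReal.mul_lt_mul_iff_right (by simp) (by simp)).2 hZ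
      _ = (4 ^ n * (4 ^ n)⁻¹) * volume (closedBall x r) := by rw [hdouble, ← h4]; ring
      _ = volume (closedBall x r) := by
          rw [ENNReal.mul_inv_cancel (by simp) (by simp), one_mul]
  have hv : ∀ S : Finset ι, ‖S.piecewise (fun _ => -r) (fun _ => r)‖ ≤ r := fun S =>
    (pi_norm_le_iff_of_nonneg hr.le).2 fun i => by
      by_cases hi : i ∈ S <;> simp [hi, abs_of_pos hr]
  obtain ⟨w, hw, hcorner⟩ := exists_mem_closedBall_forall_add_notMem volume hv hcard
  refine ⟨w, hw, fun S => ?_⟩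
  convert not_notMem.1 (hcorner S) using 1
  ext i
  by_cases hi : i ∈ S <;> simp [hi, sub_eq_add_neg]

lemma measurable_measure_Iic {α : Type*} [TopologicalSpace α] [PartialOrder α]
    [OrderClosedTopology α] [SecondCountableTopology α] [MeasurableSpace α]
    [OpensMeasurableSpace α] (μ : Measure α) [SFinite μ] :
    Measurable fun z : α => μ (Iic z) :=
  measurable_measure_prodMk_left (measurableSet_le measurable_snd measurable_fst)

section Density

variable {ι : Type*} [Fintype ι]

lemma ae_eventually_exists_closedBall_corners_mem [DecidableEq ι] {Z : Set (ι → ℝ)}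
    (hZ : MeasurableSet Z) :
    ∀ᵐ x ∂volume, x ∈ Z → ∀ᶠ r in 𝓝[>] (0 : ℝ), ∃ w ∈ closedBall x r,
      ∀ S : Finset ι, S.piecewise (fun i => w i - r) (fun i => w i + r) ∈ Z := by
  let V := IsUnifLocDoublingMeasure.vitaliFamily (volume : Measure (ι → ℝ)) 1
  filter_upwards [V.ae_tendsto_measure_inter_div_of_measurableSet hZ.compl] with x hZx hx
  have hpos : ∀ᶠ r in 𝓝[>] (0 : ℝ), 0 < r := self_mem_nhdsWithin
  have h2 : Tendsto (fun r : ℝ => 2 * r) (𝓝[>] 0) (𝓝[>] 0) := by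
    refine tendsto_nhdsWithin_iff.2 ⟨?_, hpos.mono fun r hr => mul_pos two_pos hr⟩
    simpa using tendsto_nhdsWithin_of_tendsto_nhds ((continuous_const_mul (2 : ℝ)).tendsto 0)
  have hdens : Tendsto (fun r => volume (Zᶜ ∩ closedBall x (2 * r)) / volume (closedBall x (2 * r)))
      (𝓝[>] 0) (𝓝 0) := by
    have := hZx.comp (IsUnifLocDoublingMeasure.tendsto_closedBall_filterAt volume (K := 1)
      (fun _ => x) _ h2 (hpos.mono fun r hr => mem_closedBall_self (by positivity)))
    rwa [indicator_of_notMem (notMem_compl_iff.2 hx)] at this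
  have hthreshold : (0 : ℝ≥0∞) < (4 ^ Fintype.card ι)⁻¹ := ENNReal.inv_pos.2 (by simp)
  filter_upwards [hpos, hdens.eventually (gt_mem_nhds hthreshold)] with r hr hlt
  refine exists_closedBall_corners_mem hr ?_
  exact (ENNReal.div_lt_iff (Or.inl (measure_closedBall_pos _ _ (by positivity)).ne')
    (Or.inl measure_closedBall_lt_top.ne)).1 hlt

lemma ae_restrict_rnDeriv_eq_of_measure_Iic_eq {μ ν : Measure (ι → ℝ)} [IsFiniteMeasure μ]
    [IsFiniteMeasure ν] (hμ : μ ≪ volume) (hν : ν ≪ volume) {Z : Set (ι → ℝ)}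
    (hZ : MeasurableSet Z) (hZeq : ∀ z ∈ Z, μ (Iic z) = ν (Iic z)) :
    ∀ᵐ x ∂volume.restrict Z, μ.rnDeriv volume x = ν.rnDeriv volume x := by
  classical
  let V := IsUnifLocDoublingMeasure.vitaliFamily (volume : Measure (ι → ℝ)) 1
  rw [ae_restrict_iff' hZ]
  filter_upwards [V.ae_tendsto_rnDeriv μ, V.ae_tendsto_rnDeriv ν,
    ae_eventually_exists_closedBall_corners_mem hZ] with x hμx hνx hgood hx
  obtain ⟨w, hw⟩ := (hgood hx).choice
  have hballs : Tendsto (fun r => closedBall (w r) r) (𝓝[>] 0) (V.filterAt x) :=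
    IsUnifLocDoublingMeasure.tendsto_closedBall_filterAt volume w id tendsto_id
      (hw.mono fun r h => by rw [one_mul]; exact mem_closedBall_comm.1 h.1)
  refine tendsto_nhds_unique_of_eventuallyEq (hμx.comp hballs) (hνx.comp hballs) ?_
  filter_upwards [hw, self_mem_nhdsWithin] with r ⟨_, hcorner⟩ (hr : 0 < r)
  have hIcc : closedBall (w r) r = Icc (fun i => w r i - r) (fun i => w r i + r) := by
    rw [closedBall_pi _ hr.le, ← pi_univ_Icc]
    simp_rw [Real.closedBall_eq_Icc]
  simp only [Function.comp_apply, hIcc, measure_Icc_eq_of_forall_piecewise hμ hν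
    (fun i => by linarith) fun S => hZeq _ (hcorner S)]

end Density

theorem MeasureTheory.Measure.eq_of_ae_restrict_rnDeriv_eq {α : Type*} [MeasurableSpace α]
    {μ ν ρ : Measure α} [IsFiniteMeasure μ] [IsFiniteMeasure ν] [SigmaFinite ρ] (hμ : μ ≪ ρ)
    (hν : ν ≪ ρ) {Z : Set α} (hZ : MeasurableSet Z) (hμZ : μ Zᶜ = 0) (huniv : μ univ = ν univ)
    (h : ∀ᵐ x ∂ρ.restrict Z, μ.rnDeriv ρ x = ν.rnDeriv ρ x) : μ = ν := by
  have hrestrict : μ.restrict Z = ν.restrict Z := by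
    rw [← Measure.withDensity_rnDeriv_eq μ ρ hμ, ← Measure.withDensity_rnDeriv_eq ν ρ hν,
      restrict_withDensity hZ, restrict_withDensity hZ]
    exact withDensity_congr_ae h
  have hνZ : ν Zᶜ = 0 := by
    have hZ' : μ Z = ν Z := by
      rw [← Measure.restrict_apply_univ, hrestrict, Measure.restrict_apply_univ]
    rw [measure_compl hZ (measure_ne_top _ _), ← hZ', ← huniv,
      ← measure_compl hZ (measure_ne_top _ _), hμZ]
  rw [← Measure.restrict_eq_self_of_ae_mem (ae_iff.2 hμZ),
    ← Measure.restrict_eq_self_of_ae_mem (μ := ν) (ae_iff.2 hνZ), hrestrict]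

theorem MeasureTheory.Measure.eq_of_ae_measure_Iic_eq {ι : Type*} [Fintype ι]
    {μ ν : Measure (ι → ℝ)} [IsProbabilityMeasure μ] [IsProbabilityMeasure ν] (hμ : μ ≪ volume)
    (hν : ν ≪ volume) (h : ∀ᵐ z ∂μ, μ (Iic z) = ν (Iic z)) : μ = ν := by
  have hZ : MeasurableSet {z : ι → ℝ | μ (Iic z) = ν (Iic z)} :=
    measurableSet_eq_fun (measurable_measure_Iic μ) (measurable_measure_Iic ν)
  exact Measure.eq_of_ae_restrict_rnDeriv_eq hμ hν hZ (ae_iff.1 h) (by simp)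
    (ae_restrict_rnDeriv_eq_of_measure_Iic_eq hμ hν hZ fun _ => id)

section Product

variable {ι κ : Type*} [Fintype ι] [Fintype κ]

theorem MeasureTheory.Measure.eq_of_ae_measure_Iic_eq_prod
    {μ ν : Measure ((ι → ℝ) × (κ → ℝ))} [IsProbabilityMeasure μ] [IsProbabilityMeasure ν]
    (hμ : μ ≪ volume) (hν : ν ≪ volume) (h : ∀ᵐ z ∂μ, μ (Iic z) = ν (Iic z)) : μ = ν := by
  let e := MeasurableEquiv.sumPiEquivProdPi fun _ : ι ⊕ κ => ℝ
  have he : MeasurePreserving e.symm volume volume :=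
    volume_measurePreserving_sumPiEquivProdPi_symm _
  have hmono : ∀ u v, e u ≤ e v ↔ u ≤ v := fun u v => by
    simp [e, MeasurableEquiv.coe_sumPiEquivProdPi, Equiv.sumPiEquivProdPi, Prod.le_def,
      Pi.le_def, Sum.forall]
  have hIic : ∀ (ρ : Measure ((ι → ℝ) × (κ → ℝ))) u, ρ.map e.symm (Iic u) = ρ (Iic (e u)) := by
    intro ρ u
    rw [e.symm.map_apply]
    congr 1
    ext z
    rw [mem_preimage, mem_Iic, mem_Iic, ← hmono, e.apply_symm_apply]
  have hac : ∀ ρ : Measure ((ι → ℝ) × (κ → ℝ)), ρ ≪ volume → ρ.map e.symm ≪ volume :=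
    fun ρ hρ => he.map_eq ▸ hρ.map e.symm.measurable
  have hmap : μ.map e.symm = ν.map e.symm := by
    have := Measure.isProbabilityMeasure_map (μ := μ) e.symm.measurable.aemeasurable
    have := Measure.isProbabilityMeasure_map (μ := ν) e.symm.measurable.aemeasurable
    refine Measure.eq_of_ae_measure_Iic_eq (hac μ hμ) (hac ν hν) ?_
    rw [e.symm.measurableEmbedding.ae_map_iff]
    filter_upwards [h] with z hz
    rwa [hIic, hIic, e.apply_symm_apply]
  rw [← e.map_map_symm (ν := μ), hmap, e.map_map_symm]

theorem integral_sq_measureReal_Iic_sub_eq_zero_iff {μ ν : Measure ((ι → ℝ) × (κ → ℝ))}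
    [IsProbabilityMeasure μ] [IsProbabilityMeasure ν] (hμ : μ ≪ volume) (hν : ν ≪ volume) :
    ∫ z, (μ.real (Iic z) - ν.real (Iic z)) ^ 2 ∂μ = 0 ↔ μ = ν := by
  refine ⟨fun h0 => ?_, by rintro rfl; simp⟩
  have hint : Integrable (fun z => (μ.real (Iic z) - ν.real (Iic z)) ^ 2) μ := by
    refine .of_bound ((((measurable_measure_Iic μ).ennreal_toReal.sub
      (measurable_measure_Iic ν).ennreal_toReal).pow_const 2).aestronglyMeasurable) 1
      (ae_of_all _ fun z => ?_)
    rw [Real.norm_eq_abs, abs_of_nonneg (sq_nonneg _), sq_le_one_iff_abs_le_one, abs_le]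
    constructor <;> linarith [measureReal_nonneg (μ := μ) (s := Iic z),
      measureReal_nonneg (μ := ν) (s := Iic z), measureReal_le_one (μ := μ) (s := Iic z),
      measureReal_le_one (μ := ν) (s := Iic z)]
  refine Measure.eq_of_ae_measure_Iic_eq_prod hμ hν ?_
  filter_upwards [(integral_eq_zero_iff_of_nonneg (fun _ => sq_nonneg _) hint).1 h0] with z hz
  exact (measureReal_eq_measureReal_iff (measure_ne_top _ _) (measure_ne_top _ _)).1
    (sub_eq_zero.1 (pow_eq_zero_iff two_ne_zero |>.1 hz))

lemma fst_prod_snd_Iic (μ : Measure ((ι → ℝ) × (κ → ℝ))) [IsFiniteMeasure μ]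
    (z : (ι → ℝ) × (κ → ℝ)) :
    (μ.fst.prod μ.snd) (Iic z) = μ {w | w.1 ≤ z.1} * μ {w | w.2 ≤ z.2} := by
  rw [← Iic_prod_Iic, Measure.prod_prod, Measure.fst_apply measurableSet_Iic,
    Measure.snd_apply measurableSet_Iic]
  rfl

end Product

lemma MeasureTheory.Measure.AbsolutelyContinuous.fst_prod_snd {α β : Type*} [MeasurableSpace α]
    [MeasurableSpace β] {μ : Measure (α × β)} {ν₁ : Measure α} {ν₂ : Measure β} [SFinite ν₂]
    (h : μ ≪ ν₁.prod ν₂) : μ.fst.prod μ.snd ≪ ν₁.prod ν₂ :=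
  ((h.map measurable_fst).trans Measure.quasiMeasurePreserving_fst.absolutelyContinuous).prod
    ((h.map measurable_snd).trans Measure.quasiMeasurePreserving_snd.absolutelyContinuous)

/-- for a pair `(X1, X2)` of random vectors in `ℝ^{d1} × ℝ^{d2}` with
absolutely continuous joint law `μ`, the expectation (over five independent copies of the
pair) of the product over `k = 1, 2` of
`(1/2){1(X_{k1},X_{k2} ⪯ X_{k5}) − 1(X_{k1},X_{k3} ⪯ X_{k5}) − 1(X_{k4},X_{k2} ⪯ X_{k5})
  + 1(X_{k4},X_{k3} ⪯ X_{k5})}`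
equals `E[(F_{(X1,X2)}(X_{15},X_{25}) − F_{X1}(X_{15}) F_{X2}(X_{25}))²]`, which is
nonnegative and vanishes if and only if `X1` and `X2` are independent.  Here `⪯` is the
coordinatewise order, and the CDFs are evaluated through the law `μ`. -/
theorem hoeffding_marginal_D_eq_cdf_form {d1 d2 : ℕ}
    (μ : Measure ((Fin d1 → ℝ) × (Fin d2 → ℝ))) [IsProbabilityMeasure μ]
    (h_ac : μ ≪ (volume : Measure ((Fin d1 → ℝ) × (Fin d2 → ℝ)))) :
    (∫ x, ((1 / 2 : ℝ)
          * (ind ((x 0).1 ≤ (x 4).1 ∧ (x 1).1 ≤ (x 4).1)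
            - ind ((x 0).1 ≤ (x 4).1 ∧ (x 2).1 ≤ (x 4).1)
            - ind ((x 3).1 ≤ (x 4).1 ∧ (x 1).1 ≤ (x 4).1)
            + ind ((x 3).1 ≤ (x 4).1 ∧ (x 2).1 ≤ (x 4).1)))
        * ((1 / 2 : ℝ)
          * (ind ((x 0).2 ≤ (x 4).2 ∧ (x 1).2 ≤ (x 4).2)
            - ind ((x 0).2 ≤ (x 4).2 ∧ (x 2).2 ≤ (x 4).2)
            - ind ((x 3).2 ≤ (x 4).2 ∧ (x 1).2 ≤ (x 4).2)
            + ind ((x 3).2 ≤ (x 4).2 ∧ (x 2).2 ≤ (x 4).2)))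
        ∂(Measure.pi fun _ : Fin 5 => μ))
      = ∫ z, ((μ {w | w.1 ≤ z.1 ∧ w.2 ≤ z.2}).toReal
          - (μ {w | w.1 ≤ z.1}).toReal * (μ {w | w.2 ≤ z.2}).toReal) ^ 2 ∂μ
    ∧ 0 ≤ ∫ z, ((μ {w | w.1 ≤ z.1 ∧ w.2 ≤ z.2}).toReal
          - (μ {w | w.1 ≤ z.1}).toReal * (μ {w | w.2 ≤ z.2}).toReal) ^ 2 ∂μ
    ∧ ((∫ z, ((μ {w | w.1 ≤ z.1 ∧ w.2 ≤ z.2}).toReal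
          - (μ {w | w.1 ≤ z.1}).toReal * (μ {w | w.2 ≤ z.2}).toReal) ^ 2 ∂μ) = 0
        ↔ μ = μ.fst.prod μ.snd) := by
  refine ⟨integral_hoeffdingKernel_mul μ (R := fun u v => u.1 ≤ v.1) (S := fun u v => u.2 ≤ v.2)
      (measurableSet_le (by fun_prop) (by fun_prop)) (measurableSet_le (by fun_prop) (by fun_prop)),
    integral_nonneg fun _ => sq_nonneg _, ?_⟩
  have hcdf : ∀ z : (Fin d1 → ℝ) × (Fin d2 → ℝ),
      (μ {w | w.1 ≤ z.1 ∧ w.2 ≤ z.2}).toReal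
          - (μ {w | w.1 ≤ z.1}).toReal * (μ {w | w.2 ≤ z.2}).toReal
        = μ.real (Iic z) - (μ.fst.prod μ.snd).real (Iic z) := fun z => by
    rw [measureReal_def, measureReal_def, fst_prod_snd_Iic, ENNReal.toReal_mul]
    rfl
  simp_rw [hcdf]
  exact integral_sq_measureReal_Iic_sub_eq_zero_iff h_ac h_ac.fst_prod_snd
end

section
/- Let P be a probability measure on ℝ^d that is absolutely continuous with respect to Lebesgue measure, and let Ψ : ℝ^d → ℝ be a convex function (hence differentiable Lebesgue-a.e., and therefore P-a.e.) such that the pushforward of P under ∇Ψ is the spherical uniform distribution U_d. Fix v ∈ ℝ^d, a > 0, and an orthogonal d × d matrix O, and define Ψ*(z) := a Ψ(a^{-1} Oᵀ (z − v)). Then: (i) Ψ* is convex; (ii) Ψ* is differentiable at v + aOz whenever Ψ is differentiable at z, with ∇Ψ*(v + aOz) = O ∇Ψ(z); and (iii) if Z ∼ P, the pushforward of the distribution of v + aOZ under ∇Ψ* is again U_d. In particular, z ↦ O ∇Ψ(a^{-1}Oᵀ(z − v)) is a center-outward distribution function of v + aOZ. -/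
/-!
The similarity `T z = v + a O z` transports `Ψ` to `Ψ* = a Ψ ∘ T⁻¹`, so convexity is preserved
and the chain rule gives `∇Ψ* ∘ T = O ∇Ψ`; since differentiability of `Ψ` at `z` and of `Ψ*` at
`T z` are equivalent, this identity also holds where both gradients take the junk value `0`.
Hence `∇Ψ*` pushes `T_# P` forward to `O_# U_d`, and `U_d` is invariant under isometries: the
surface measure `toSphere` is read off from the Lebesgue measure of cones `(0,1) • s`, which a
linear isometry preserves.
-/

open MeasureTheory Matrix

/-- The uniform (normalized surface) probability measure on the unit sphere of `ℝ^d`. -/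
noncomputable def unitSphereUniform (d : ℕ) :
    Measure (Metric.sphere (0 : EuclideanSpace ℝ (Fin d)) 1) :=
  ((volume : Measure (EuclideanSpace ℝ (Fin d))).toSphere Set.univ)⁻¹ •
    (volume : Measure (EuclideanSpace ℝ (Fin d))).toSphere

/-- The spherical uniform distribution `U_d` on the open unit ball of `ℝ^d`: the pushforward
of the product of the uniform distribution on `[0,1)` and the uniform probability measure on
the unit sphere under `(r, s) ↦ r • s`. -/
noncomputable def sphericalUniform (d : ℕ) : Measure (EuclideanSpace ℝ (Fin d)) :=
  ((volume.restrict (Set.Ico (0 : ℝ) 1)).prod (unitSphereUniform d)).map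
    fun p => p.1 • (p.2 : EuclideanSpace ℝ (Fin d))

open Set Metric
open scoped Pointwise

namespace Matrix

variable {n : Type*} [Fintype n] [DecidableEq n]

noncomputable def orthogonalLinearIsometryEquiv (O : Matrix n n ℝ) (hO : O * Oᵀ = 1) :
    EuclideanSpace ℝ n ≃ₗᵢ[ℝ] EuclideanSpace ℝ n :=
  Unitary.linearIsometryEquiv ⟨toEuclideanCLM (n := n) (𝕜 := ℝ) O, Unitary.map_mem _ <| by
    rwa [mem_unitaryGroup_iff, star_eq_conjTranspose, conjTranspose_eq_transpose_of_trivial]⟩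

theorem coe_orthogonalLinearIsometryEquiv (O : Matrix n n ℝ) (hO : O * Oᵀ = 1) :
    ⇑(O.orthogonalLinearIsometryEquiv hO) = toEuclideanLin O :=
  rfl

theorem coe_orthogonalLinearIsometryEquiv_symm (O : Matrix n n ℝ) (hO : O * Oᵀ = 1) :
    ⇑(O.orthogonalLinearIsometryEquiv hO).symm = toEuclideanLin Oᵀ := by
  ext1 x
  rw [LinearIsometryEquiv.symm_apply_eq, coe_orthogonalLinearIsometryEquiv]
  simp [toLpLin_apply, mulVec_mulVec, hO]

end Matrix

theorem LinearEquiv.set_smul_preimage {R M N : Type*} [Semiring R] [AddCommMonoid M]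
    [AddCommMonoid N] [Module R M] [Module R N] (e : M ≃ₗ[R] N) (S : Set R) (B : Set N) :
    S • e ⁻¹' B = e ⁻¹' (S • B) := by
  ext x
  simp only [mem_smul, mem_preimage]
  constructor
  · rintro ⟨r, hr, y, hy, rfl⟩
    exact ⟨r, hr, e y, hy, (e.map_smul r y).symm⟩
  · rintro ⟨r, hr, u, hu, hru⟩
    exact ⟨r, hr, e.symm u, by simpa using hu, e.injective (by simp [hru])⟩

variable {E F : Type*} [NormedAddCommGroup E] [InnerProductSpace ℝ E]
  [NormedAddCommGroup F] [InnerProductSpace ℝ F]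

namespace LinearIsometryEquiv

theorem mapsTo_sphere_zero (e : E ≃ₗᵢ[ℝ] F) (r : ℝ) : MapsTo e (sphere 0 r) (sphere 0 r) :=
  fun x hx => by simpa using hx

def unitSphereMap (e : E ≃ₗᵢ[ℝ] F) : sphere (0 : E) 1 → sphere (0 : F) 1 :=
  (e.mapsTo_sphere_zero 1).restrict

theorem continuous_unitSphereMap (e : E ≃ₗᵢ[ℝ] F) : Continuous e.unitSphereMap :=
  e.continuous.restrict _

theorem image_val_preimage_unitSphereMap (e : E ≃ₗᵢ[ℝ] F) (s : Set (sphere (0 : F) 1)) :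
    ((↑) : sphere (0 : E) 1 → E) '' (e.unitSphereMap ⁻¹' s) = e ⁻¹' ((↑) '' s) := by
  ext x
  constructor
  · rintro ⟨y, hy, rfl⟩
    exact ⟨_, hy, rfl⟩
  · rintro ⟨y, hy, hyx⟩
    have hx : x ∈ sphere (0 : E) 1 := by
      have : e x ∈ sphere (0 : F) 1 := hyx ▸ y.2
      simpa using this
    refine ⟨⟨x, hx⟩, ?_, rfl⟩
    rwa [mem_preimage, show e.unitSphereMap ⟨x, hx⟩ = y from Subtype.ext hyx.symm]

end LinearIsometryEquiv

theorem MeasureTheory.Measure.toSphere_map_unitSphereMap [MeasurableSpace E] [BorelSpace E]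
    [MeasurableSpace F] [BorelSpace F] {μ : Measure E} {ν : Measure F} (e : E ≃ₗᵢ[ℝ] F)
    (he : MeasurePreserving e μ ν) :
    μ.toSphere.map e.unitSphereMap = ν.toSphere := by
  have hf : Measurable e.unitSphereMap := e.continuous_unitSphereMap.measurable
  ext s hs
  rw [map_apply hf hs, toSphere_apply' _ (hf hs), toSphere_apply' _ hs,
    e.toLinearEquiv.finrank_eq, e.image_val_preimage_unitSphereMap,
    ← e.coe_toLinearEquiv, LinearEquiv.set_smul_preimage, e.coe_toLinearEquiv,
    he.measure_preimage_emb e.toHomeomorph.measurableEmbedding]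

instance {d : ℕ} : SFinite (unitSphereUniform d) := by
  unfold unitSphereUniform
  infer_instance

theorem unitSphereUniform_map_unitSphereMap {d : ℕ}
    (e : EuclideanSpace ℝ (Fin d) ≃ₗᵢ[ℝ] EuclideanSpace ℝ (Fin d)) :
    (unitSphereUniform d).map e.unitSphereMap = unitSphereUniform d := by
  rw [unitSphereUniform, Measure.map_smul,
    Measure.toSphere_map_unitSphereMap e e.measurePreserving]

theorem sphericalUniform_map_linearIsometryEquiv {d : ℕ}
    (e : EuclideanSpace ℝ (Fin d) ≃ₗᵢ[ℝ] EuclideanSpace ℝ (Fin d)) :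
    (sphericalUniform d).map e = sphericalUniform d := by
  let polar : ℝ × sphere (0 : EuclideanSpace ℝ (Fin d)) 1 → EuclideanSpace ℝ (Fin d) :=
    fun p => p.1 • (p.2 : EuclideanSpace ℝ (Fin d))
  have h_polar : Measurable polar :=
    (continuous_fst.smul (continuous_subtype_val.comp continuous_snd)).measurable
  have hf : Measurable e.unitSphereMap := e.continuous_unitSphereMap.measurable
  have h_comm : e ∘ polar = polar ∘ Prod.map id e.unitSphereMap := by
    funext p
    simp [polar, LinearIsometryEquiv.unitSphereMap]
  rw [sphericalUniform, Measure.map_map e.continuous.measurable h_polar, h_comm,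
    ← Measure.map_map h_polar (measurable_id.prodMap hf),
    ← Measure.map_prod_map _ _ measurable_id hf, Measure.map_id,
    unitSphereUniform_map_unitSphereMap]

noncomputable def similarityTransform (e : E ≃ₗᵢ[ℝ] F) (v : F) (a : ℝ) (Ψ : E → ℝ) (y : F) : ℝ :=
  a * Ψ (a⁻¹ • e.symm (y - v))

section similarityTransform

variable {Ψ : E → ℝ} {a : ℝ}

theorem ConvexOn.similarityTransform (hΨ : ConvexOn ℝ univ Ψ) (e : E ≃ₗᵢ[ℝ] F) (v : F)
    (ha : 0 ≤ a) : ConvexOn ℝ univ (similarityTransform e v a Ψ) :=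
  (hΨ.comp_affineMap ((a⁻¹ • e.symm.toLinearEquiv.toLinearMap).toAffineMap.comp
    (AffineEquiv.vaddConst ℝ v).symm.toAffineMap)).smul ha

@[simp]
theorem similarityTransform_apply_add_smul (e : E ≃ₗᵢ[ℝ] F) (v : F) (ha : a ≠ 0) (z : E) :
    similarityTransform e v a Ψ (v + a • e z) = a * Ψ z := by
  simp [similarityTransform, ha]

variable [CompleteSpace E]

theorem measurable_gradient [MeasurableSpace E] [BorelSpace E] (Ψ : E → ℝ) :
    Measurable (gradient Ψ) :=
  (InnerProductSpace.toDual ℝ E).symm.continuous.measurable.comp (measurable_fderiv ℝ Ψ)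

theorem map_map_similarity_eq [MeasurableSpace E] [BorelSpace E] [MeasurableSpace F]
    [BorelSpace F] {μ : Measure E} (e : E ≃ₗᵢ[ℝ] F) (v : F) (a : ℝ) {G : F → F}
    (hG : Measurable G) (hGT : ∀ z, G (v + a • e z) = e (gradient Ψ z)) :
    (μ.map fun z => v + a • e z).map G = (μ.map (gradient Ψ)).map e := by
  rw [Measure.map_map hG (by fun_prop),
    Measure.map_map e.continuous.measurable (measurable_gradient Ψ)]
  exact congrArg (Measure.map · μ) (funext hGT)

variable [CompleteSpace F]

theorem HasGradientAt.similarityTransform {g z : E} (h : HasGradientAt Ψ g z)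
    (e : E ≃ₗᵢ[ℝ] F) (v : F) (ha : a ≠ 0) :
    HasGradientAt (similarityTransform e v a Ψ) (e g) (v + a • e z) := by
  rw [hasGradientAt_iff_hasFDerivAt] at h ⊢
  have h_inv : HasFDerivAt (fun y => a⁻¹ • e.symm (y - v)) (a⁻¹ • (e.symm : F →L[ℝ] E))
      (v + a • e z) := by
    have := (a⁻¹ • (e.symm : F →L[ℝ] E)).hasFDerivAt.comp (v + a • e z)
      ((hasFDerivAt_id _).sub_const v)
    rwa [ContinuousLinearMap.comp_id] at this
  have h_inv_apply : a⁻¹ • e.symm (v + a • e z - v) = z := by simp [ha]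
  rw [← h_inv_apply] at h
  refine ((h.comp (f := fun y => a⁻¹ • e.symm (y - v)) _ h_inv).const_mul a).congr_fderiv ?_
  ext w
  simp [e.inner_map_eq_flip, ha]

theorem differentiableAt_similarityTransform_iff (e : E ≃ₗᵢ[ℝ] F) (v : F) (ha : a ≠ 0)
    {z : E} :
    DifferentiableAt ℝ (similarityTransform e v a Ψ) (v + a • e z) ↔ DifferentiableAt ℝ Ψ z := by
  refine ⟨fun h => ?_, fun h => (h.hasGradientAt.similarityTransform e v ha).differentiableAt⟩
  have := (h.comp (f := fun x => v + a • e x) z (by fun_prop)).const_mul a⁻¹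
  simpa [Function.comp_def, similarityTransform_apply_add_smul e v ha, ha] using this

theorem gradient_similarityTransform (e : E ≃ₗᵢ[ℝ] F) (v : F) (ha : a ≠ 0) (z : E) :
    gradient (similarityTransform e v a Ψ) (v + a • e z) = e (gradient Ψ z) := by
  by_cases h : DifferentiableAt ℝ Ψ z
  · exact (h.hasGradientAt.similarityTransform e v ha).gradient
  · rw [gradient_eq_zero_of_not_differentiableAt h, gradient_eq_zero_of_not_differentiableAt
      ((differentiableAt_similarityTransform_iff e v ha).not.2 h), map_zero]

end similarityTransform

theorem centerOutward_equivariance_general {d : ℕ}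
    (P : Measure (EuclideanSpace ℝ (Fin d)))
    (Ψ : EuclideanSpace ℝ (Fin d) → ℝ)
    (h_conv : ConvexOn ℝ Set.univ Ψ)
    (h_push : P.map (fun z => gradient Ψ z) = sphericalUniform d)
    (v : EuclideanSpace ℝ (Fin d)) (a : ℝ) (ha : 0 < a)
    (O : Matrix (Fin d) (Fin d) ℝ) (hO : O * Oᵀ = 1) :
    ConvexOn ℝ Set.univ
        (fun z => a * Ψ ((a⁻¹ : ℝ) • Matrix.toEuclideanLin Oᵀ (z - v)))
    ∧ (∀ (z g : EuclideanSpace ℝ (Fin d)), HasGradientAt Ψ g z →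
        HasGradientAt (fun z' => a * Ψ ((a⁻¹ : ℝ) • Matrix.toEuclideanLin Oᵀ (z' - v)))
          (Matrix.toEuclideanLin O g) (v + a • Matrix.toEuclideanLin O z))
    ∧ ((P.map (fun z => v + a • Matrix.toEuclideanLin O z)).map
        (fun z => gradient (fun z' => a * Ψ ((a⁻¹ : ℝ) • Matrix.toEuclideanLin Oᵀ (z' - v))) z)
          = sphericalUniform d)
    ∧ ((P.map (fun z => v + a • Matrix.toEuclideanLin O z)).map
        (fun z => Matrix.toEuclideanLin O
          (gradient Ψ ((a⁻¹ : ℝ) • Matrix.toEuclideanLin Oᵀ (z - v))))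
          = sphericalUniform d) := by
  rw [← O.coe_orthogonalLinearIsometryEquiv hO, ← O.coe_orthogonalLinearIsometryEquiv_symm hO]
  set e := O.orthogonalLinearIsometryEquiv hO
  have h_push_rotated : (P.map (gradient Ψ)).map e = sphericalUniform d := by
    rw [h_push, sphericalUniform_map_linearIsometryEquiv]
  refine ⟨h_conv.similarityTransform e v ha.le, fun z g hg => hg.similarityTransform e v ha.ne',
    ?_, ?_⟩
  · exact (map_map_similarity_eq e v a (measurable_gradient _)
      (gradient_similarityTransform e v ha.ne')).trans h_push_rotated
  · have hG : Measurable fun z => e (gradient Ψ (a⁻¹ • e.symm (z - v))) :=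
      e.continuous.measurable.comp ((measurable_gradient Ψ).comp (by fun_prop))
    exact (map_map_similarity_eq e v a hG fun z => by simp [ha.ne']).trans h_push_rotated

/-- equivariance of center-outward distribution functions.  Let `P` be an
absolutely continuous probability measure on `ℝ^d` and `Ψ` a convex potential whose gradient
pushes `P` forward to the spherical uniform `U_d`.  For `v ∈ ℝ^d`, `a > 0` and an orthogonal
matrix `O`, set `Ψ*(z) := a Ψ(a⁻¹ Oᵀ (z − v))`.  Then (i) `Ψ*` is convex; (ii) wherever `Ψ`
has gradient `g` at `z`, `Ψ*` has gradient `O g` at `v + aOz`; (iii) the gradient of `Ψ*`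
pushes the law of `v + aOZ` (for `Z ∼ P`) forward to `U_d`; in particular (iv) the map
`z ↦ O ∇Ψ(a⁻¹ Oᵀ (z − v))` pushes that law forward to `U_d`. -/
theorem centerOutward_equivariance {d : ℕ} (hd : 1 ≤ d)
    (P : Measure (EuclideanSpace ℝ (Fin d))) [IsProbabilityMeasure P]
    (h_ac : P ≪ (volume : Measure (EuclideanSpace ℝ (Fin d))))
    (Ψ : EuclideanSpace ℝ (Fin d) → ℝ)
    (h_conv : ConvexOn ℝ Set.univ Ψ)
    (h_push : P.map (fun z => gradient Ψ z) = sphericalUniform d)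
    (v : EuclideanSpace ℝ (Fin d)) (a : ℝ) (ha : 0 < a)
    (O : Matrix (Fin d) (Fin d) ℝ) (hO : O * Oᵀ = 1) :
    ConvexOn ℝ Set.univ
        (fun z => a * Ψ ((a⁻¹ : ℝ) • Matrix.toEuclideanLin Oᵀ (z - v)))
    ∧ (∀ (z g : EuclideanSpace ℝ (Fin d)), HasGradientAt Ψ g z →
        HasGradientAt (fun z' => a * Ψ ((a⁻¹ : ℝ) • Matrix.toEuclideanLin Oᵀ (z' - v)))
          (Matrix.toEuclideanLin O g) (v + a • Matrix.toEuclideanLin O z))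
    ∧ ((P.map (fun z => v + a • Matrix.toEuclideanLin O z)).map
        (fun z => gradient (fun z' => a * Ψ ((a⁻¹ : ℝ) • Matrix.toEuclideanLin Oᵀ (z' - v))) z)
          = sphericalUniform d)
    ∧ ((P.map (fun z => v + a • Matrix.toEuclideanLin O z)).map
        (fun z => Matrix.toEuclideanLin O
          (gradient Ψ ((a⁻¹ : ℝ) • Matrix.toEuclideanLin Oᵀ (z - v))))
          = sphericalUniform d) :=
  centerOutward_equivariance_general P Ψ h_conv h_push v a ha O hO
end

section
/- Let m ≥ 2, let H be a subgroup of S_m with cardinality card(H), and let f1 : (ℝ^{d1})^m → ℝ, f2 : (ℝ^{d2})^m → ℝ. Let n ≥ m and let z_i = (y_{1i}, y_{2i}) and z'_i = (y'_{1i}, y'_{2i}), i = 1,…,n, be two arrays of points in ℝ^{d1} × ℝ^{d2}. Define U := (n)_m^{-1} Σ k_{f1,f2,H}(z_{i_1},…,z_{i_m}) and U' := (n)_m^{-1} Σ k_{f1,f2,H}(z'_{i_1},…,z'_{i_m}), where both sums range over all (n)_m := n!/(n−m)! m-tuples (i_1,…,i_m) of distinct indices in {1,…,n}. If C_1, C_2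 ≥ 0 are such that |f_k(y_{k i_1},…,y_{k i_m})| ≤ C_k and |f_k(y'_{k i_1},…,y'_{k i_m})| ≤ C_k for all such tuples and k = 1,2, then |U' − U| ≤ card(H)² [ C_1 · (n)_m^{-1} Σ |f_2(y'_{2 i_1},…,y'_{2 i_m}) − f_2(y_{2 i_1},…,y_{2 i_m})| + C_2 · (n)_m^{-1} Σ |f_1(y'_{1 i_1},…,y'_{1 i_m}) − f_1(y_{1 i_1},…,y_{1 i_m})| ], the sums again ranging over all m-tuples of distinct indices. -/
/-- The U-statistic `(n)_m⁻¹ Σ_{(i_1,…,i_m) distinct} k_{f1,f2,H}(z_{i_1},…,z_{i_m})`,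
the sum ranging over all `m`-tuples of distinct indices (injective `ι : Fin m → Fin n`). -/
noncomputable def uStat {m n : ℕ} {E1 E2 : Type*} (H : Finset (Equiv.Perm (Fin m)))
    (f1 : (Fin m → E1) → ℝ) (f2 : (Fin m → E2) → ℝ)
    (y1 : Fin n → E1) (y2 : Fin n → E2) : ℝ :=
  ((n.descFactorial m : ℝ))⁻¹ *
    ∑ ι ∈ Finset.univ.filter (fun ι : Fin m → Fin n => Function.Injective ι),
      depKernel H f1 f2 (fun j => (y1 (ι j), y2 (ι j)))

open Finset

section PermSum

variable {m : ℕ} {E : Type*} (H : Finset (Equiv.Perm (Fin m))) (f : (Fin m → E) → ℝ)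

lemma abs_permSum_le {x : Fin m → E} {C : ℝ} (h : ∀ σ ∈ H, |f (x ∘ σ)| ≤ C) :
    |permSum H f x| ≤ #H * C :=
  calc |permSum H f x|
      ≤ ∑ σ ∈ H, |((Equiv.Perm.sign σ : ℤ) : ℝ) * f (x ∘ σ)| := abs_sum_le_sum_abs _ _
    _ ≤ ∑ _σ ∈ H, C := sum_le_sum fun σ hσ => by
        rw [abs_mul, abs_unit_intCast, one_mul]
        exact h σ hσ
    _ = #H * C := by rw [sum_const, nsmul_eq_mul]

lemma abs_permSum_sub_permSum_le (x x' : Fin m → E) :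
    |permSum H f x' - permSum H f x| ≤ ∑ σ ∈ H, |f (x' ∘ σ) - f (x ∘ σ)| := by
  rw [permSum, permSum, ← sum_sub_distrib]
  refine (abs_sum_le_sum_abs _ _).trans (sum_le_sum fun σ _ => ?_)
  rw [← mul_sub, abs_mul, abs_unit_intCast, one_mul]
  rfl

end PermSum

lemma abs_mul_sub_mul_le {R : Type*} [CommRing R] [LinearOrder R] [IsOrderedRing R] (a a' b b' : R) :
    |a' * b' - a * b| ≤ |a'| * |b' - b| + |b| * |a' - a| :=
  calc |a' * b' - a * b| = |a' * (b' - b) + b * (a' - a)| := by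
        rw [show a' * b' - a * b = a' * (b' - b) + b * (a' - a) by ring]
    _ ≤ |a' * (b' - b)| + |b * (a' - a)| := abs_add_le _ _
    _ = |a'| * |b' - b| + |b| * |a' - a| := by rw [abs_mul, abs_mul]

lemma abs_depKernel_sub_depKernel_le {m : ℕ} {E1 E2 : Type*} (H : Finset (Equiv.Perm (Fin m)))
    (f1 : (Fin m → E1) → ℝ) (f2 : (Fin m → E2) → ℝ) (x1 x1' : Fin m → E1) (x2 x2' : Fin m → E2)
    {C1 C2 : ℝ} (hC1 : 0 ≤ C1) (hC2 : 0 ≤ C2)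
    (hf1 : ∀ σ ∈ H, |f1 (x1' ∘ σ)| ≤ C1) (hf2 : ∀ σ ∈ H, |f2 (x2 ∘ σ)| ≤ C2) :
    |depKernel H f1 f2 (fun j => (x1' j, x2' j)) - depKernel H f1 f2 (fun j => (x1 j, x2 j))|
      ≤ #H * C1 * ∑ σ ∈ H, |f2 (x2' ∘ σ) - f2 (x2 ∘ σ)|
        + #H * C2 * ∑ σ ∈ H, |f1 (x1' ∘ σ) - f1 (x1 ∘ σ)| := by
  have hA' := abs_permSum_le H f1 hf1
  have hB := abs_permSum_le H f2 hf2
  have hdA := abs_permSum_sub_permSum_le H f1 x1 x1'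
  have hdB := abs_permSum_sub_permSum_le H f2 x2 x2'
  refine (abs_mul_sub_mul_le _ _ _ _).trans ?_
  gcongr

section InjectiveTuples

variable {α β M : Type*} [Fintype α] [DecidableEq α] [Fintype β] [DecidableEq β]
  [AddCommMonoid M]

lemma sum_injective_comp_perm (σ : Equiv.Perm α) (g : (α → β) → M) :
    ∑ ι ∈ univ.filter (fun ι : α → β => ι.Injective), g (ι ∘ σ)
      = ∑ ι ∈ univ.filter (fun ι : α → β => ι.Injective), g ι :=
  sum_equiv (σ.symm.arrowCongr (Equiv.refl β))
    (fun ι => by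
      simp only [mem_filter, mem_univ, true_and]
      exact (Function.Injective.of_comp_iff' ι σ.bijective).symm)
    (fun _ _ => rfl)

lemma sum_injective_sum_comp_perm (H : Finset (Equiv.Perm α)) (g : (α → β) → M) :
    ∑ ι ∈ univ.filter (fun ι : α → β => ι.Injective), ∑ σ ∈ H, g (ι ∘ σ)
      = #H • ∑ ι ∈ univ.filter (fun ι : α → β => ι.Injective), g ι := by
  rw [sum_comm, ← sum_const]
  exact sum_congr rfl fun σ _ => sum_injective_comp_perm σ g

end InjectiveTuples

lemma abs_uStat_sub_uStat_le {m n : ℕ} {E1 E2 : Type*} (H : Finset (Equiv.Perm (Fin m)))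
    (f1 : (Fin m → E1) → ℝ) (f2 : (Fin m → E2) → ℝ)
    (y1 y1' : Fin n → E1) (y2 y2' : Fin n → E2) :
    |uStat H f1 f2 y1' y2' - uStat H f1 f2 y1 y2|
      ≤ ((n.descFactorial m : ℝ))⁻¹ *
        ∑ ι ∈ univ.filter (fun ι : Fin m → Fin n => Function.Injective ι),
          |depKernel H f1 f2 (fun j => (y1' (ι j), y2' (ι j)))
            - depKernel H f1 f2 (fun j => (y1 (ι j), y2 (ι j)))| := by
  rw [uStat, uStat, ← mul_sub, abs_mul, abs_of_nonneg (by positivity), ← sum_sub_distrib]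
  gcongr
  exact abs_sum_le_sum_abs _ _

theorem uStat_difference_bound_general {m n : ℕ} {E1 E2 : Type*}
    (H : Finset (Equiv.Perm (Fin m)))
    (f1 : (Fin m → E1) → ℝ) (f2 : (Fin m → E2) → ℝ)
    (y1 y1' : Fin n → E1) (y2 y2' : Fin n → E2)
    (C1 C2 : ℝ) (hC1 : 0 ≤ C1) (hC2 : 0 ≤ C2)
    (hf1_bdd : ∀ ι : Fin m → Fin n, Function.Injective ι →
      |f1 (y1 ∘ ι)| ≤ C1 ∧ |f1 (y1' ∘ ι)| ≤ C1)
    (hf2_bdd : ∀ ι : Fin m → Fin n, Function.Injective ι →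
      |f2 (y2 ∘ ι)| ≤ C2 ∧ |f2 (y2' ∘ ι)| ≤ C2) :
    |uStat H f1 f2 y1' y2' - uStat H f1 f2 y1 y2|
      ≤ (H.card : ℝ) ^ 2 *
        (C1 * (((n.descFactorial m : ℝ))⁻¹ *
            ∑ ι ∈ Finset.univ.filter (fun ι : Fin m → Fin n => Function.Injective ι),
              |f2 (y2' ∘ ι) - f2 (y2 ∘ ι)|)
          + C2 * (((n.descFactorial m : ℝ))⁻¹ *
            ∑ ι ∈ Finset.univ.filter (fun ι : Fin m → Fin n => Function.Injective ι),
              |f1 (y1' ∘ ι) - f1 (y1 ∘ ι)|)) := by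
  refine (abs_uStat_sub_uStat_le H f1 f2 y1 y1' y2 y2').trans ?_
  have hkernel : ∀ ι ∈ univ.filter (fun ι : Fin m → Fin n => Function.Injective ι),
      |depKernel H f1 f2 (fun j => (y1' (ι j), y2' (ι j)))
          - depKernel H f1 f2 (fun j => (y1 (ι j), y2 (ι j)))|
        ≤ #H * C1 * ∑ σ ∈ H, |f2 (y2' ∘ ι ∘ σ) - f2 (y2 ∘ ι ∘ σ)|
          + #H * C2 * ∑ σ ∈ H, |f1 (y1' ∘ ι ∘ σ) - f1 (y1 ∘ ι ∘ σ)| := by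
    intro ι hι
    have hinj (σ : Equiv.Perm (Fin m)) : (ι ∘ σ).Injective :=
      (mem_filter.mp hι).2.comp σ.injective
    exact abs_depKernel_sub_depKernel_le H f1 f2 (y1 ∘ ι) (y1' ∘ ι) (y2 ∘ ι) (y2' ∘ ι) hC1 hC2
      (fun σ _ => (hf1_bdd _ (hinj σ)).2) (fun σ _ => (hf2_bdd _ (hinj σ)).1)
  calc _ ≤ ((n.descFactorial m : ℝ))⁻¹ *
        ∑ ι ∈ univ.filter (fun ι : Fin m → Fin n => Function.Injective ι),
          (#H * C1 * ∑ σ ∈ H, |f2 (y2' ∘ ι ∘ σ) - f2 (y2 ∘ ι ∘ σ)|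
            + #H * C2 * ∑ σ ∈ H, |f1 (y1' ∘ ι ∘ σ) - f1 (y1 ∘ ι ∘ σ)|) :=
        mul_le_mul_of_nonneg_left (sum_le_sum hkernel) (by positivity)
    _ = _ := by
      rw [sum_add_distrib, ← mul_sum, ← mul_sum,
        sum_injective_sum_comp_perm H fun ι => |f2 (y2' ∘ ι) - f2 (y2 ∘ ι)|,
        sum_injective_sum_comp_perm H fun ι => |f1 (y1' ∘ ι) - f1 (y1 ∘ ι)|, nsmul_eq_mul,
        nsmul_eq_mul]
      ring

/-- stability bound for U-statistics built from the dependence kernel.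
If the kernels are bounded by `C1` and `C2` along all distinct-index tuples of both arrays,
then the difference of the two U-statistics is controlled by `card(H)²` times the average
absolute kernel differences. -/
theorem uStat_difference_bound {m n : ℕ} {E1 E2 : Type*} (hm : 2 ≤ m) (hn : m ≤ n)
    (H : Finset (Equiv.Perm (Fin m)))
    (hH_one : (1 : Equiv.Perm (Fin m)) ∈ H)
    (hH_mul : ∀ σ ∈ H, ∀ τ ∈ H, σ * τ ∈ H)
    (hH_inv : ∀ σ ∈ H, σ⁻¹ ∈ H)
    (f1 : (Fin m → E1) → ℝ) (f2 : (Fin m → E2) → ℝ)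
    (y1 y1' : Fin n → E1) (y2 y2' : Fin n → E2)
    (C1 C2 : ℝ) (hC1 : 0 ≤ C1) (hC2 : 0 ≤ C2)
    (hf1_bdd : ∀ ι : Fin m → Fin n, Function.Injective ι →
      |f1 (y1 ∘ ι)| ≤ C1 ∧ |f1 (y1' ∘ ι)| ≤ C1)
    (hf2_bdd : ∀ ι : Fin m → Fin n, Function.Injective ι →
      |f2 (y2 ∘ ι)| ≤ C2 ∧ |f2 (y2' ∘ ι)| ≤ C2) :
    |uStat H f1 f2 y1' y2' - uStat H f1 f2 y1 y2|
      ≤ (H.card : ℝ) ^ 2 *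
        (C1 * (((n.descFactorial m : ℝ))⁻¹ *
            ∑ ι ∈ Finset.univ.filter (fun ι : Fin m → Fin n => Function.Injective ι),
              |f2 (y2' ∘ ι) - f2 (y2 ∘ ι)|)
          + C2 * (((n.descFactorial m : ℝ))⁻¹ *
            ∑ ι ∈ Finset.univ.filter (fun ι : Fin m → Fin n => Function.Injective ι),
              |f1 (y1' ∘ ι) - f1 (y1 ∘ ι)|)) :=
  uStat_difference_bound_general H f1 f2 y1 y1' y2 y2' C1 C2 hC1 hC2 hf1_bdd hf2_bdd
end
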